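/- arXiv:1105.1176 — 5 statements merged into one kernel-verified Lean document; each statement's English description precedes it below -/
import Mathlib

section
/- For all positive integers q, m, n with gcd(mn, q) = 1, the sum of χ(m)·conj(χ(n)) over all primitive Dirichlet characters χ modulo q equals ∑_{cd = q, d | (m−n)} μ(c) φ(d), i.e. ∑_{d | q, d | (m−n)} μ(q/d) φ(d). -/
/-!
Every Dirichlet character mod `e` is induced by exactly one primitive character, whose level
is its conductor `d ∣ e`, and inducing does not change `χ(m) · conj χ(n)` when `m, n` are prime
to `e`. So by orthogonality, `∑_{χ mod e} χ(m) conj χ(n) = [e ∣ m − n] φ(e)` is the divisor sum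
`∑_{d ∣ e} S(d)`, where `S(d)` is the sum over primitive characters mod `d`. As this holds for
every `e ∣ q`, Möbius inversion gives `S(q)`.
-/

open scoped Classical

noncomputable section

/-- Sum of `f` over the primitive Dirichlet characters mod `q` (zero when `q = 0`;
for `q = 1` the trivial character is primitive). -/
def primSum (q : ℕ) (f : DirichletCharacter ℂ q → ℂ) : ℂ :=
  if h : q = 0 then 0 else
    haveI : NeZero q := ⟨h⟩
    ∑ χ : DirichletCharacter ℂ q, if χ.IsPrimitive then f χ else 0

open ComplexConjugate Finset

namespace DirichletCharacter

section Decomposition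

variable {R : Type*} [CommRing R]

lemma changeLevel_apply_natCast {d e m : ℕ} (hd : d ∣ e) (χ : DirichletCharacter R d)
    (hm : m.Coprime e) : changeLevel hd χ m = χ m := by
  simpa using changeLevel_eq_cast_of_dvd' χ hd (Nat.isCoprime_iff_coprime.mpr hm)

variable [IsDomain R] {M : Type*} [AddCommMonoid M]

lemma sum_conductor_eq_sum_isPrimitive {d e : ℕ} [NeZero e] (hd : d ∣ e)
    (F : DirichletCharacter R e → M) :
    ∑ χ with χ.conductor = d, F χ =
      ∑ ψ : DirichletCharacter R d with ψ.IsPrimitive, F (changeLevel hd ψ) := by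
  symm
  refine sum_bij (fun ψ _ ↦ changeLevel hd ψ) ?_ (fun _ _ _ _ h ↦ changeLevel_injective hd h) ?_
    fun _ _ ↦ rfl
  · intro ψ hψ
    simp only [mem_filter, mem_univ, true_and] at hψ ⊢
    rwa [conductor_changeLevel]
  · intro χ hχ
    simp only [mem_filter, mem_univ, true_and] at hχ
    subst hχ
    exact ⟨χ.primitiveCharacter, by simpa using χ.primitiveCharacter_isPrimitive,
      χ.changeLevel_primitiveCharacter⟩

lemma sum_eq_sum_divisors_sum_isPrimitive {e : ℕ} [NeZero e]
    (F : (d : ℕ) → DirichletCharacter R d → M)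
    (hF : ∀ d (hd : d ∣ e) (ψ : DirichletCharacter R d), F e (changeLevel hd ψ) = F d ψ) :
    ∑ χ, F e χ = ∑ d ∈ e.divisors, ∑ ψ : DirichletCharacter R d with ψ.IsPrimitive, F d ψ := by
  rw [← sum_fiberwise_of_maps_to (g := conductor) (t := e.divisors)
    fun χ _ ↦ Nat.mem_divisors.mpr ⟨χ.conductor_dvd_level, NeZero.ne e⟩]
  refine sum_congr rfl fun d hd ↦ ?_
  rw [sum_conductor_eq_sum_isPrimitive (Nat.dvd_of_mem_divisors hd)]
  simp only [hF]

end Decomposition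

lemma conj_apply_eq_apply_inv {e : ℕ} (χ : DirichletCharacter ℂ e) {b : ZMod e} (hb : IsUnit b) :
    conj (χ b) = χ b⁻¹ := by
  obtain ⟨u, rfl⟩ := hb
  rw [← RCLike.star_def, MulChar.star_apply', MulChar.inv_apply, Ring.inverse_unit,
    ZMod.inv_coe_unit]

lemma sum_apply_mul_conj_apply {e : ℕ} [NeZero e] (a : ZMod e) {b : ZMod e} (hb : IsUnit b) :
    ∑ χ : DirichletCharacter ℂ e, χ a * conj (χ b) = if b = a then (e.totient : ℂ) else 0 := by
  rw [← sum_char_inv_mul_char_eq ℂ hb a]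
  exact sum_congr rfl fun χ _ ↦ by rw [mul_comm, conj_apply_eq_apply_inv χ hb]

end DirichletCharacter

open DirichletCharacter

lemma primSum_eq_sum_isPrimitive {q : ℕ} (hq : q ≠ 0) (f : DirichletCharacter ℂ q → ℂ) :
    primSum q f = ∑ χ with χ.IsPrimitive, f χ := by
  rw [primSum, dif_neg hq, sum_filter]

lemma sum_divisors_primSum_apply_mul_conj_apply {e m n : ℕ} (he : e ≠ 0) (hm : m.Coprime e)
    (hn : n.Coprime e) :
    ∑ d ∈ e.divisors, primSum d (fun χ ↦ χ m * conj (χ n)) =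
      if (e : ℤ) ∣ (m : ℤ) - n then (e.totient : ℂ) else 0 := by
  have : NeZero e := ⟨he⟩
  have hnu : IsUnit (n : ZMod e) := (ZMod.isUnit_iff_coprime n e).mpr hn
  have hmn : (n : ZMod e) = m ↔ (e : ℤ) ∣ (m : ℤ) - n := by
    exact_mod_cast ZMod.intCast_eq_intCast_iff_dvd_sub n m e
  simp only [← hmn]
  rw [← sum_apply_mul_conj_apply _ hnu,
    sum_eq_sum_divisors_sum_isPrimitive (fun d χ ↦ χ m * conj (χ n)) fun d hd ψ ↦ by
      simp only [changeLevel_apply_natCast hd ψ hm, changeLevel_apply_natCast hd ψ hn]]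
  refine sum_congr rfl fun d hd ↦ ?_
  rw [primSum_eq_sum_isPrimitive (Nat.ne_of_gt (Nat.pos_of_mem_divisors hd))]

theorem sum_primitive_chars_eq_general (q m n : ℕ) (hco : Nat.gcd (m * n) q = 1) :
    primSum q (fun χ => χ (m : ZMod q) * (starRingEnd ℂ) (χ (n : ZMod q))) =
      ∑ d ∈ q.divisors,
        if (d : ℤ) ∣ ((m : ℤ) - (n : ℤ)) then
          ((ArithmeticFunction.moebius (q / d) : ℤ) : ℂ) * (Nat.totient d : ℂ)
        else 0 := by
  obtain rfl | hq := q.eq_zero_or_pos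
  · simp [primSum]
  obtain ⟨hmq, hnq⟩ := Nat.coprime_mul_iff_left.mp hco
  have hsum : ∀ e > 0, e ∈ {e | e ∣ q} →
      ∑ d ∈ e.divisors, primSum d (fun χ ↦ χ m * conj (χ n)) =
        if (e : ℤ) ∣ (m : ℤ) - n then (e.totient : ℂ) else 0 := fun e he heq ↦
    sum_divisors_primSum_apply_mul_conj_apply he.ne' (hmq.coprime_dvd_right heq)
      (hnq.coprime_dvd_right heq)
  rw [← (ArithmeticFunction.sum_eq_iff_sum_mul_moebius_eq_on _ fun _ _ h h' ↦ h.trans h').mp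
    hsum q hq dvd_rfl,
    Nat.sum_divisorsAntidiagonal' fun a b ↦ (ArithmeticFunction.moebius a : ℂ) *
      if (b : ℤ) ∣ (m : ℤ) - n then (b.totient : ℂ) else 0]
  refine sum_congr rfl fun d _ ↦ ?_
  split_ifs <;> simp

/-- For positive integers `q, m, n` with `gcd(mn, q) = 1`, the sum of
`χ(m) · conj(χ(n))` over the primitive Dirichlet characters mod `q` equals
`∑_{d ∣ q, d ∣ (m − n)} μ(q/d) φ(d)`. -/
theorem sum_primitive_chars_eq (q m n : ℕ) (hq : 0 < q) (hm : 0 < m) (hn : 0 < n)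
    (hco : Nat.gcd (m * n) q = 1) :
    primSum q (fun χ => χ (m : ZMod q) * (starRingEnd ℂ) (χ (n : ZMod q))) =
      ∑ d ∈ q.divisors,
        if (d : ℤ) ∣ ((m : ℤ) - (n : ℤ)) then
          ((ArithmeticFunction.moebius (q / d) : ℤ) : ℂ) * (Nat.totient d : ℂ)
        else 0 :=
  sum_primitive_chars_eq_general q m n hco
end
end

section
/- For every positive integer q, every positive integer N, and arbitrary complex numbers a_1, …, a_N, one has ∑_{χ mod q} |∑_{n ≤ N} a_n χ(n)|² ≤ (q + N) ∑_{n ≤ N} |a_n|², where the outer sum runs over all Dirichlet characters χ modulo q. -/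
/-!
Group the `n ≤ N` by their residue `r` mod `q`, with `T r := ∑_{n ≡ r} a_n`. Orthogonality of
Dirichlet characters gives `∑_χ |∑_r T r χ(r)|² = φ(q) ∑_{r unit} |T r|²`, and by Cauchy–Schwarz
on each residue class, which has at most `N / q + 1` elements, `∑_r |T r|² ≤ (N / q + 1) ∑ |a_n|²`.
Finally `φ(q) (N / q + 1) ≤ q (N / q) + q ≤ N + q`.
-/

open Finset ComplexConjugate

theorem Finset.sum_mul_comp_eq_sum_fiberwise {ι κ R : Type*} [Fintype κ] [DecidableEq κ]
    [NonUnitalNonAssocSemiring R] (s : Finset ι) (g : ι → κ) (a : ι → R) (f : κ → R) :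
    ∑ i ∈ s, a i * f (g i) = ∑ k, (∑ i ∈ s with g i = k, a i) * f k := by
  rw [← sum_fiberwise s g]
  refine sum_congr rfl fun k _ => ?_
  rw [sum_mul]
  exact sum_congr rfl fun i hi => by rw [(mem_filter.mp hi).2]

theorem norm_sum_sq_le_card_mul_sum_norm_sq {ι E : Type*} [SeminormedAddCommGroup E]
    (s : Finset ι) (a : ι → E) : ‖∑ i ∈ s, a i‖ ^ 2 ≤ #s * ∑ i ∈ s, ‖a i‖ ^ 2 :=
  (pow_le_pow_left₀ (norm_nonneg _) (norm_sum_le _ _) 2).trans sq_sum_le_card_mul_sum_sq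

theorem sum_norm_sum_fiberwise_sq_le {ι κ E : Type*} [Fintype κ] [DecidableEq κ]
    [SeminormedAddCommGroup E] (s : Finset ι) (g : ι → κ) (a : ι → E) {M : ℕ}
    (hM : ∀ k, #{i ∈ s | g i = k} ≤ M) :
    ∑ k, ‖∑ i ∈ s with g i = k, a i‖ ^ 2 ≤ M * ∑ i ∈ s, ‖a i‖ ^ 2 := by
  calc ∑ k, ‖∑ i ∈ s with g i = k, a i‖ ^ 2
      ≤ ∑ k, (M : ℝ) * ∑ i ∈ s with g i = k, ‖a i‖ ^ 2 := by
        gcongr with k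
        refine (norm_sum_sq_le_card_mul_sum_norm_sq _ _).trans ?_
        gcongr
        exact_mod_cast hM k
    _ = M * ∑ i ∈ s, ‖a i‖ ^ 2 := by rw [← mul_sum, sum_fiberwise]

theorem card_filter_natCast_eq_le {s : Finset ℕ} {N : ℕ} (hs : ∀ n ∈ s, n ≤ N) (q : ℕ)
    (r : ZMod q) : #{n ∈ s | ((n : ℕ) : ZMod q) = r} ≤ N / q + 1 := by
  calc #{n ∈ s | ((n : ℕ) : ZMod q) = r} ≤ #(range (N / q + 1)) := by
        refine card_le_card_of_injOn (· / q) (fun n hn => ?_) (fun n hn m hm hnm => ?_)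
        · simp only [coe_filter, Set.mem_ofPred_eq] at hn
          simpa [Nat.lt_succ_iff] using Nat.div_le_div_right (hs n hn.1)
        · simp only [coe_filter, Set.mem_ofPred_eq] at hn hm
          have hmod : n % q = m % q :=
            (ZMod.natCast_eq_natCast_iff' n m q).mp (hn.2.trans hm.2.symm)
          rw [← Nat.div_add_mod n q, ← Nat.div_add_mod m q, hmod, show n / q = m / q from hnm]
    _ = N / q + 1 := card_range _

theorem Nat.totient_mul_div_add_one_le (q N : ℕ) : q.totient * (N / q + 1) ≤ q + N :=
  calc q.totient * (N / q + 1) ≤ q * (N / q) + q := by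
        rw [mul_add_one]
        gcongr <;> exact Nat.totient_le q
    _ ≤ q + N := by rw [add_comm]; gcongr; exact Nat.mul_div_le N q

namespace DirichletCharacter

variable {q : ℕ} [NeZero q]

theorem sum_conj_mul_eq (m n : ZMod q) :
    ∑ χ : DirichletCharacter ℂ q, conj (χ m) * χ n =
      if IsUnit m ∧ m = n then (q.totient : ℂ) else 0 := by
  by_cases hm : IsUnit m
  · have hconj (χ : DirichletCharacter ℂ q) : conj (χ m) * χ n = χ (Ring.inverse m * n) := by
      rw [map_mul, ← MulChar.inv_apply, ← MulChar.star_apply']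
      rfl
    simp only [hconj, sum_characters_eq, Ring.inverse_mul_eq_iff_eq_mul _ _ _ hm, mul_one,
      hm, true_and, eq_comm]
  · simp [MulChar.map_nonunit _ hm, hm]

theorem sum_norm_sq_sum_mul_eq (f : ZMod q → ℂ) :
    ∑ χ : DirichletCharacter ℂ q, ‖∑ r, f r * χ r‖ ^ 2 =
      q.totient * ∑ r with IsUnit r, ‖f r‖ ^ 2 := by
  have hexpand (χ : DirichletCharacter ℂ q) : ((‖∑ r, f r * χ r‖ ^ 2 : ℝ) : ℂ) =
      ∑ m, ∑ n, conj (f m) * f n * (conj (χ m) * χ n) := by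
    rw [Complex.ofReal_pow, ← Complex.conj_mul', map_sum, sum_mul_sum]
    exact sum_congr rfl fun m _ => sum_congr rfl fun n _ => by rw [map_mul]; ring
  suffices h : ∑ χ : DirichletCharacter ℂ q, ((‖∑ r, f r * χ r‖ ^ 2 : ℝ) : ℂ) =
      q.totient * ∑ r with IsUnit r, ((‖f r‖ ^ 2 : ℝ) : ℂ) by
    exact_mod_cast h
  calc ∑ χ : DirichletCharacter ℂ q, ((‖∑ r, f r * χ r‖ ^ 2 : ℝ) : ℂ)
      = ∑ m, ∑ n, conj (f m) * f n * ∑ χ : DirichletCharacter ℂ q, conj (χ m) * χ n := by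
        simp only [hexpand, mul_sum]
        rw [sum_comm]
        exact sum_congr rfl fun m _ => sum_comm
    _ = q.totient * ∑ r with IsUnit r, ((‖f r‖ ^ 2 : ℝ) : ℂ) := by
        simp only [sum_conj_mul_eq, mul_ite, mul_zero, ite_and, sum_filter, mul_sum]
        refine sum_congr rfl fun m _ => ?_
        split_ifs
        · rw [sum_ite_eq, if_pos (mem_univ _), Complex.ofReal_pow, ← Complex.conj_mul']
          ring
        · exact sum_const_zero

end DirichletCharacter

theorem large_sieve_single_modulus_general (q : ℕ) [NeZero q] (N : ℕ) (a : ℕ → ℂ) :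
    ∑ χ : DirichletCharacter ℂ q, ‖∑ n ∈ Finset.Icc 1 N, a n * χ (n : ZMod q)‖ ^ 2 ≤
      ((q : ℝ) + (N : ℝ)) * ∑ n ∈ Finset.Icc 1 N, ‖a n‖ ^ 2 := by
  set T : ZMod q → ℂ := fun r => ∑ n ∈ Icc 1 N with ((n : ℕ) : ZMod q) = r, a n
  calc ∑ χ : DirichletCharacter ℂ q, ‖∑ n ∈ Icc 1 N, a n * χ (n : ZMod q)‖ ^ 2
      = q.totient * ∑ r with IsUnit r, ‖T r‖ ^ 2 := by
        rw [← DirichletCharacter.sum_norm_sq_sum_mul_eq T]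
        refine sum_congr rfl fun χ _ => ?_
        rw [sum_mul_comp_eq_sum_fiberwise (Icc 1 N) (fun n : ℕ => (n : ZMod q)) a χ]
    _ ≤ q.totient * ∑ r, ‖T r‖ ^ 2 := by
        gcongr
        exact filter_subset _ _
    _ ≤ q.totient * ((N / q + 1 : ℕ) * ∑ n ∈ Icc 1 N, ‖a n‖ ^ 2) := by
        gcongr
        exact sum_norm_sum_fiberwise_sq_le _ _ _
          (card_filter_natCast_eq_le (fun n hn => (mem_Icc.mp hn).2) q)
    _ ≤ (q + N) * ∑ n ∈ Icc 1 N, ‖a n‖ ^ 2 := by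
        rw [← mul_assoc]
        gcongr
        exact_mod_cast Nat.totient_mul_div_add_one_le q N

/-- The large sieve inequality for a single modulus: for every positive integer `q`,
every positive integer `N` and arbitrary complex numbers `a_1, …, a_N`,
`∑_{χ mod q} |∑_{n ≤ N} a_n χ(n)|² ≤ (q + N) ∑_{n ≤ N} |a_n|²`,
the outer sum running over all Dirichlet characters modulo `q`. -/
theorem large_sieve_single_modulus (q : ℕ) [NeZero q] (N : ℕ) (hN : 0 < N) (a : ℕ → ℂ) :
    ∑ χ : DirichletCharacter ℂ q, ‖∑ n ∈ Finset.Icc 1 N, a n * χ (n : ZMod q)‖ ^ 2 ≤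
      ((q : ℝ) + (N : ℝ)) * ∑ n ∈ Finset.Icc 1 N, ‖a n‖ ^ 2 :=
  large_sieve_single_modulus_general q N a
end

section
/- Suppose Ψ is supported in [ψ₀, ψ₁] with 0 < ψ₀ < ψ₁, let Q ≥ 1, let C > ψ₁/ψ₀ and set K = ψ₁Q/C. Then for every pair of positive integers m, n: Δ''(m,n) = −∑_{c ≤ C} ∑_{l ≥ 1, gcd(cl, mn) = 1} μ(c) ∑_{1 ≤ k ≤ K} (Ψ(ckl/Q)/φ(ckl)) ∑*_{χ mod k} χ(m) conj(χ(n)). -/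
open scoped Classical
set_option maxHeartbeats 2000000

noncomputable section

/-- `Δ''(m,n) = ∑∑_{c > C, (cd,mn)=1, d ∣ (m−n)} Ψ(cd/Q) μ(c) φ(d)/φ(cd)`. -/
def DeltaPP (Ψ : ℝ → ℝ) (Q C : ℝ) (m n : ℕ) : ℂ :=
  ∑' c : ℕ, ∑' d : ℕ,
    if 1 ≤ d ∧ C < (c : ℝ) ∧ Nat.gcd (c * d) (m * n) = 1 ∧ (d : ℤ) ∣ ((m : ℤ) - (n : ℤ))
    then ((Ψ ((c : ℝ) * (d : ℝ) / Q) * ((ArithmeticFunction.moebius c : ℤ) : ℝ) *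
        (Nat.totient d : ℝ) / (Nat.totient (c * d) : ℝ) : ℝ) : ℂ)
    else 0

/-- `Δ'(m,n) = ∑∑_{c ≤ C, (cd,mn)=1, d ∣ (m−n)} Ψ(cd/Q) μ(c) φ(d)/φ(cd)`. -/
def DeltaP (Ψ : ℝ → ℝ) (Q C : ℝ) (m n : ℕ) : ℂ :=
  ∑' c : ℕ, ∑' d : ℕ,
    if 1 ≤ c ∧ 1 ≤ d ∧ (c : ℝ) ≤ C ∧ Nat.gcd (c * d) (m * n) = 1 ∧
        (d : ℤ) ∣ ((m : ℤ) - (n : ℤ))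
    then ((Ψ ((c : ℝ) * (d : ℝ) / Q) * ((ArithmeticFunction.moebius c : ℤ) : ℝ) *
        (Nat.totient d : ℝ) / (Nat.totient (c * d) : ℝ) : ℝ) : ℂ)
    else 0

lemma isUnit_int_cast_zmod {b : ℤ} {q : ℕ} (h : IsCoprime b (q : ℤ)) :
    IsUnit ((b : ZMod q)) := by
  obtain ⟨x, y, hxy⟩ := h
  refine IsUnit.of_mul_eq_one (x : ZMod q) ?_
  have : ((x * b + y * q : ℤ) : ZMod q) = 1 := by rw [hxy]; norm_cast
  push_cast at this
  rw [ZMod.natCast_self] at this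
  rw [mul_comm]
  linear_combination this

lemma isCoprime_of_isUnit_zmod {b : ℤ} {q : ℕ} (h : IsUnit ((b : ZMod q))) :
    IsCoprime b (q : ℤ) := by
  obtain ⟨v, hv⟩ := h.exists_right_inv
  obtain ⟨w, hw⟩ := ZMod.intCast_surjective (n := q) v
  rw [← hw, ← Int.cast_mul, ← sub_eq_zero, ← Int.cast_one, ← Int.cast_sub,
    ZMod.intCast_zmod_eq_zero_iff_dvd] at hv
  obtain ⟨t, ht⟩ := hv
  exact ⟨w, -t, by linarith [ht]⟩

/-- CRT-type lifting of units. -/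
lemma crt_unit_lift {k c d : ℕ} [NeZero d] (hk : k ∣ d) (hc : c ∣ d)
    (u : (ZMod k)ˣ) (hu : ZMod.unitsMap (Nat.gcd_dvd_left k c) u = 1) :
    ∃ w : (ZMod d)ˣ, ZMod.unitsMap hk w = u ∧ ZMod.unitsMap hc w = 1 := by
  have hd : d ≠ 0 := NeZero.ne d
  have hkne : NeZero k := ⟨fun h => hd (Nat.eq_zero_of_zero_dvd (h ▸ hk))⟩
  have hcne : NeZero c := ⟨fun h => hd (Nat.eq_zero_of_zero_dvd (h ▸ hc))⟩
  set g : ℕ := Nat.gcd k c with hg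
  set a : ℤ := ((u : ZMod k).val : ℤ) with ha
  have hak : ((a : ℤ) : ZMod k) = (u : ZMod k) := by
    simp [ha, ZMod.natCast_val, ZMod.intCast_cast, ZMod.cast_id]
  -- image of u in ZMod g is 1
  have hag : ((a : ℤ) : ZMod g) = 1 := by
    have := congrArg (fun w : (ZMod g)ˣ => (w : ZMod g)) hu
    simp only [ZMod.unitsMap_def, Units.coe_map, Units.val_one] at this
    rw [← this]
    show ((a : ℤ) : ZMod g) = (ZMod.castHom (Nat.gcd_dvd_left k c) (ZMod g)).toMonoidHom (u : ZMod k)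
    rw [← hak]
    simp
  have hgdvd : (g : ℤ) ∣ a - 1 := by
    rwa [← ZMod.intCast_zmod_eq_zero_iff_dvd, Int.cast_sub, Int.cast_one, sub_eq_zero]
  obtain ⟨t, ht⟩ := hgdvd
  -- Bezout
  have hbez : (g : ℤ) = k * Int.gcdA k c + c * Int.gcdB k c := by
    have := Int.gcd_eq_gcd_ab (k : ℤ) (c : ℤ)
    rwa [Int.gcd_natCast_natCast] at this
  set b : ℤ := a - k * (Int.gcdA k c * t) with hb
  have hbk : ((b : ℤ) : ZMod k) = (u : ZMod k) := by
    rw [hb]; push_cast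
    rw [ZMod.natCast_self]
    rw [← hak]; ring
  have hbc : ((b : ℤ) : ZMod c) = 1 := by
    have : b - 1 = (c : ℤ) * (Int.gcdB k c * t) := by
      have h3 : a - 1 = (k * Int.gcdA k c + c * Int.gcdB k c) * t := by rw [← hbez, ht]
      rw [hb]
      linear_combination h3
    have h2 : ((b - 1 : ℤ) : ZMod c) = 0 := by
      rw [this]; push_cast; rw [ZMod.natCast_self]; ring
    rw [Int.cast_sub, Int.cast_one, sub_eq_zero] at h2
    exact h2
  -- b is coprime to lcm k c
  have hcopk : IsCoprime b (k : ℤ) := isCoprime_of_isUnit_zmod (hbk ▸ (u : (ZMod k)ˣ).isUnit)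
  have hcopc : IsCoprime b (c : ℤ) := isCoprime_of_isUnit_zmod (hbc ▸ isUnit_one)
  set L : ℕ := Nat.lcm k c with hL
  have hLd : L ∣ d := Nat.lcm_dvd hk hc
  have hLkc : (L : ℤ) ∣ (k : ℤ) * c := Int.natCast_dvd_natCast.mpr (Nat.lcm_dvd_mul k c)
  have hcopL : IsCoprime b (L : ℤ) := (hcopk.mul_right hcopc).of_isCoprime_of_dvd_right hLkc
  have hbL : IsUnit ((b : ZMod L)) := isUnit_int_cast_zmod hcopL
  obtain ⟨w, hw⟩ := ZMod.unitsMap_surjective hLd hbL.unit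
  have hkL : k ∣ L := Nat.dvd_lcm_left k c
  have hcL : c ∣ L := Nat.dvd_lcm_right k c
  refine ⟨w, ?_, ?_⟩
  · have h1 : ZMod.unitsMap hk w = ZMod.unitsMap hkL (ZMod.unitsMap hLd w) := by
      rw [← MonoidHom.comp_apply, ZMod.unitsMap_comp]
    rw [h1, hw]
    apply Units.ext
    show (ZMod.castHom hkL (ZMod k)).toMonoidHom (hbL.unit : ZMod L) = (u : ZMod k)
    rw [IsUnit.unit_spec]
    rw [← hbk]
    exact map_intCast (ZMod.castHom hkL (ZMod k)) b
  · have h1 : ZMod.unitsMap hc w = ZMod.unitsMap hcL (ZMod.unitsMap hLd w) := by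
      rw [← MonoidHom.comp_apply, ZMod.unitsMap_comp]
    rw [h1, hw]
    apply Units.ext
    show (ZMod.castHom hcL (ZMod c)).toMonoidHom (hbL.unit : ZMod L) = ((1 : (ZMod c)ˣ) : ZMod c)
    rw [IsUnit.unit_spec, Units.val_one, ← hbc]
    exact map_intCast (ZMod.castHom hcL (ZMod c)) b

open DirichletCharacter

lemma conductor_changeLevel_primitive {k d : ℕ} [NeZero d] (hk : k ∣ d)
    (χ₀ : DirichletCharacter ℂ k) (hχ₀ : χ₀.IsPrimitive) :
    (changeLevel hk χ₀).conductor = k := by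
  have hd : d ≠ 0 := NeZero.ne d
  have hkne : NeZero k := ⟨fun h => hd (Nat.eq_zero_of_zero_dvd (h ▸ hk))⟩
  set χ' := changeLevel hk χ₀ with hχ'
  have hle : χ'.conductor ≤ k := Nat.sInf_le (changeLevel_factorsThrough χ₀ hk)
  have hcd : χ'.conductor ∣ d := conductor_dvd_level χ'
  have hcne : χ'.conductor ≠ 0 := conductor_ne_zero χ'
  -- χ₀ factors through gcd k (conductor χ')
  have hft : χ₀.FactorsThrough (Nat.gcd k χ'.conductor) := by
    rw [factorsThrough_iff_ker_unitsMap (Nat.gcd_dvd_left k χ'.conductor)]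
    intro u hu
    obtain ⟨w, hw1, hw2⟩ := crt_unit_lift hk hcd u hu
    have hker := (factorsThrough_iff_ker_unitsMap hcd).mp (factorsThrough_conductor χ')
    have hwker : w ∈ (ZMod.unitsMap hcd).ker := by
      rw [MonoidHom.mem_ker, hw2]
    have := hker hwker
    rw [MonoidHom.mem_ker] at this ⊢
    rw [hχ', changeLevel_toUnitHom, MonoidHom.comp_apply, hw1] at this
    exact this
  have h1 : χ₀.conductor ≤ Nat.gcd k χ'.conductor := Nat.sInf_le hft
  have h2 : Nat.gcd k χ'.conductor ≤ χ'.conductor :=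
    Nat.le_of_dvd (Nat.pos_of_ne_zero hcne) (Nat.gcd_dvd_right _ _)
  have := hχ₀ ▸ (h1.trans h2)
  omega

/-- any factor at conductor level is primitive -/
lemma isPrimitive_of_eq_changeLevel {d : ℕ} (hd : d ≠ 0) (χ : DirichletCharacter ℂ d)
    (ψ : DirichletCharacter ℂ χ.conductor) (h : χ = changeLevel (conductor_dvd_level χ) ψ) :
    ψ.IsPrimitive := by
  have hcne : χ.conductor ≠ 0 := haveI : NeZero d := ⟨hd⟩; conductor_ne_zero χ
  have h1 : ψ.conductor ≤ χ.conductor :=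
    Nat.le_of_dvd (Nat.pos_of_ne_zero hcne) (conductor_dvd_level ψ)
  have hft : χ.FactorsThrough ψ.conductor := by
    refine ⟨(conductor_dvd_level ψ).trans (conductor_dvd_level χ), (factorsThrough_conductor ψ).χ₀, ?_⟩
    conv_lhs => rw [h, (factorsThrough_conductor ψ).eq_changeLevel]
    rw [← changeLevel_trans]
  have h2 : χ.conductor ≤ ψ.conductor := Nat.sInf_le hft
  exact le_antisymm h1 h2

lemma changeLevel_apply_natCast {k d : ℕ} (hk : k ∣ d) (χ₀ : DirichletCharacter ℂ k)
    (a : ℕ) (ha : Nat.Coprime a d) :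
    (changeLevel hk χ₀) (a : ZMod d) = χ₀ (a : ZMod k) := by
  have hu : IsUnit ((a : ZMod d)) := (ZMod.isUnit_iff_coprime a d).mpr ha
  rw [← hu.unit_spec, changeLevel_eq_cast_of_dvd χ₀ hk hu.unit]
  congr 1
  have : ((hu.unit : (ZMod d)ˣ) : ZMod d) = (a : ZMod d) := hu.unit_spec
  rw [this]
  exact ZMod.cast_natCast hk a

lemma sum_divisors_primSum (m n d : ℕ) (hd : 0 < d) (hcop : Nat.gcd d (m * n) = 1) :
    ∑ k ∈ d.divisors,
        primSum k (fun χ => χ (m : ZMod k) * (starRingEnd ℂ) (χ (n : ZMod k)))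
      = if (d : ℤ) ∣ (m : ℤ) - (n : ℤ) then (d.totient : ℂ) else 0 := by
  haveI : NeZero d := ⟨hd.ne'⟩
  have hdm : Nat.Coprime m d := ((Nat.coprime_mul_iff_right.mp hcop).1).symm
  have hdn : Nat.Coprime n d := ((Nat.coprime_mul_iff_right.mp hcop).2).symm
  -- Step b: partition by conductor
  have hstep :
      ∑ k ∈ d.divisors,
          primSum k (fun χ => χ (m : ZMod k) * (starRingEnd ℂ) (χ (n : ZMod k)))
        = ∑ χ : DirichletCharacter ℂ d, χ (m : ZMod d) * (starRingEnd ℂ) (χ (n : ZMod d)) := by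
    have h1 : ∀ k ∈ d.divisors,
        primSum k (fun χ => χ (m : ZMod k) * (starRingEnd ℂ) (χ (n : ZMod k)))
          = ∑ χ₀ ∈ Finset.univ.filter (fun χ₀ : DirichletCharacter ℂ k => χ₀.IsPrimitive),
              χ₀ (m : ZMod k) * (starRingEnd ℂ) (χ₀ (n : ZMod k)) := by
      intro k hk
      have hk0 : k ≠ 0 := (Nat.pos_of_mem_divisors hk).ne'
      haveI : NeZero k := ⟨hk0⟩
      rw [primSum, dif_neg hk0, Finset.sum_filter]
    rw [Finset.sum_congr rfl h1, Finset.sum_sigma']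
    refine Finset.sum_bij
      (fun a ha => changeLevel (Nat.mem_divisors.mp (Finset.mem_sigma.mp ha).1).1 a.2)
      (fun a ha => Finset.mem_univ _) ?_ ?_ ?_
    · -- injectivity
      rintro ⟨k₁, χ₁⟩ ha₁ ⟨k₂, χ₂⟩ ha₂ heq
      have hp₁ : χ₁.IsPrimitive := by
        have := (Finset.mem_sigma.mp ha₁).2; simpa using this
      have hp₂ : χ₂.IsPrimitive := by
        have := (Finset.mem_sigma.mp ha₂).2; simpa using this
      have hd₁ := (Nat.mem_divisors.mp (Finset.mem_sigma.mp ha₁).1).1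
      have hd₂ := (Nat.mem_divisors.mp (Finset.mem_sigma.mp ha₂).1).1
      have heq' : changeLevel hd₁ χ₁ = changeLevel hd₂ χ₂ := heq
      have hk : k₁ = k₂ := by
        have e1 := conductor_changeLevel_primitive hd₁ χ₁ hp₁
        have e2 := conductor_changeLevel_primitive hd₂ χ₂ hp₂
        dsimp only at e1 e2
        rw [← e1, ← e2, heq']
      subst hk
      have h3 : χ₁ = χ₂ := changeLevel_injective (R := ℂ) hd₁ heq'
      exact congrArg _ h3
    · -- surjectivity
      intro χ _
      have hft := factorsThrough_conductor χ
      refine ⟨⟨χ.conductor, hft.χ₀⟩, ?_, ?_⟩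
      · refine Finset.mem_sigma.mpr ⟨Nat.mem_divisors.mpr ⟨conductor_dvd_level χ, hd.ne'⟩, ?_⟩
        simp only [Finset.mem_filter, Finset.mem_univ, true_and]
        exact isPrimitive_of_eq_changeLevel hd.ne' χ hft.χ₀ hft.eq_changeLevel
      · exact hft.eq_changeLevel.symm
    · -- values agree
      rintro ⟨k, χ₀⟩ ha
      have hdvd := (Nat.mem_divisors.mp (Finset.mem_sigma.mp ha).1).1
      rw [changeLevel_apply_natCast hdvd χ₀ m hdm, changeLevel_apply_natCast hdvd χ₀ n hdn]
  rw [hstep]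
  -- Step a: orthogonality
  have hnu : IsUnit ((n : ZMod d)) := (ZMod.isUnit_iff_coprime n d).mpr hdn
  have h : Monoid.exponent (ZMod d)ˣ ≠ 0 := Monoid.exponent_ne_zero_of_finite
  haveI : NeZero ((Monoid.exponent (ZMod d)ˣ : ℕ) : ℂ) := ⟨by exact_mod_cast h⟩
  have horth := DirichletCharacter.sum_char_inv_mul_char_eq ℂ hnu (m : ZMod d)
  have hconj : ∀ χ : DirichletCharacter ℂ d,
      (starRingEnd ℂ) (χ (n : ZMod d)) = χ ((n : ZMod d))⁻¹ := by
    intro χ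
    have h1 : χ (n : ZMod d) * χ ((n : ZMod d))⁻¹ = 1 := by
      rw [← map_mul, ZMod.mul_inv_of_unit _ hnu, map_one]
    have h2 : χ (n : ZMod d) * (starRingEnd ℂ) (χ (n : ZMod d)) = 1 := by
      rw [Complex.mul_conj]
      norm_cast
      rw [← hnu.unit_spec]
      have := DirichletCharacter.unit_norm_eq_one χ hnu.unit
      rw [← Complex.sq_norm]
      rw [this]; norm_num
    have hne : χ (n : ZMod d) ≠ 0 := by
      intro h0; rw [h0, zero_mul] at h1; exact one_ne_zero h1.symm
    rw [← h1] at h2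
    exact mul_left_cancel₀ hne h2
  have heq : ∑ χ : DirichletCharacter ℂ d, χ (m : ZMod d) * (starRingEnd ℂ) (χ (n : ZMod d))
      = ∑ χ : DirichletCharacter ℂ d, χ ((n : ZMod d))⁻¹ * χ (m : ZMod d) := by
    refine Finset.sum_congr rfl fun χ _ => ?_
    rw [hconj χ, mul_comm]
  rw [heq, horth]
  congr 1
  rw [eq_iff_iff]
  rw [ZMod.natCast_eq_natCast_iff]
  exact Nat.modEq_iff_dvd

lemma primSum_eq_zero {m n k : ℕ} (h : Nat.gcd k (m * n) ≠ 1) :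
    primSum k (fun χ => χ (m : ZMod k) * (starRingEnd ℂ) (χ (n : ZMod k))) = 0 := by
  rw [primSum]
  split_ifs with hk
  · rfl
  · haveI : NeZero k := ⟨hk⟩
    refine Finset.sum_eq_zero fun χ _ => ?_
    have hcop : ¬(Nat.Coprime k m ∧ Nat.Coprime k n) := by
      rw [← Nat.coprime_mul_iff_right]; exact h
    rw [not_and_or] at hcop
    rcases hcop with hcm | hcn
    · have : ¬IsUnit ((m : ZMod k)) := by
        rw [ZMod.isUnit_iff_coprime]; exact fun hc => hcm hc.symm
      simp [MulChar.map_nonunit χ this]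
    · have : ¬IsUnit ((n : ZMod k)) := by
        rw [ZMod.isUnit_iff_coprime]; exact fun hc => hcn hc.symm
      simp [MulChar.map_nonunit χ this]

lemma sum_antidiag_box {M₀ : Type*} [AddCommMonoid M₀] (N : ℕ) (g : ℕ → ℕ → M₀)
    (hg : ∀ k l, 1 ≤ k → 1 ≤ l → N < k * l → g k l = 0) :
    ∑ d ∈ Finset.Icc 1 N, ∑ p ∈ d.divisorsAntidiagonal, g p.1 p.2
      = ∑ k ∈ Finset.Icc 1 N, ∑ l ∈ Finset.Icc 1 N, g k l := by
  rw [Finset.sum_sigma']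
  rw [← Finset.sum_product']
  rw [← Finset.sum_filter_add_sum_filter_not (Finset.Icc 1 N ×ˢ Finset.Icc 1 N)
    (fun p => p.1 * p.2 ≤ N)]
  have hzero : ∑ p ∈ (Finset.Icc 1 N ×ˢ Finset.Icc 1 N).filter (fun p => ¬ p.1 * p.2 ≤ N),
      g p.1 p.2 = 0 := by
    refine Finset.sum_eq_zero fun p hp => ?_
    simp only [Finset.mem_filter, Finset.mem_product, Finset.mem_Icc, not_le] at hp
    exact hg p.1 p.2 hp.1.1.1 hp.1.2.1 hp.2
  rw [hzero, add_zero]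
  refine (Finset.sum_nbij'
    (s := (Finset.Icc 1 N).sigma Nat.divisorsAntidiagonal)
    (t := (Finset.Icc 1 N ×ˢ Finset.Icc 1 N).filter (fun p => p.1 * p.2 ≤ N))
    (f := fun x => g x.snd.1 x.snd.2) (g := fun x => g x.1 x.2)
    (fun a => (a.2.1, a.2.2))
    (fun p : ℕ × ℕ => (⟨p.1 * p.2, p⟩ : (_ : ℕ) × ℕ × ℕ)) ?_ ?_ ?_ ?_ ?_)
  · rintro ⟨d, k, l⟩ hd
    simp only [Finset.mem_sigma, Finset.mem_Icc, Nat.mem_divisorsAntidiagonal] at hd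
    obtain ⟨⟨hd1, hd2⟩, hkl, hd0⟩ := hd
    have hk0 : k ≠ 0 := by rintro rfl; simp at hkl; omega
    have hl0 : l ≠ 0 := by rintro rfl; simp at hkl; omega
    simp only [Finset.mem_filter, Finset.mem_product, Finset.mem_Icc]
    have hkN : k ≤ N := le_trans (Nat.le_of_dvd (by omega) ⟨l, hkl.symm⟩) hd2
    have hlN : l ≤ N := le_trans (Nat.le_of_dvd (by omega) ⟨k, by rw [mul_comm]; exact hkl.symm⟩) hd2
    exact ⟨⟨⟨Nat.one_le_iff_ne_zero.mpr hk0, hkN⟩, ⟨Nat.one_le_iff_ne_zero.mpr hl0, hlN⟩⟩,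
      by rw [hkl]; exact hd2⟩
  · rintro ⟨k, l⟩ hp
    simp only [Finset.mem_filter, Finset.mem_product, Finset.mem_Icc] at hp
    simp only [Finset.mem_sigma, Finset.mem_Icc, Nat.mem_divisorsAntidiagonal]
    have hk1 : 1 ≤ k := hp.1.1.1
    have hl1 : 1 ≤ l := hp.1.2.1
    exact ⟨⟨Nat.one_le_iff_ne_zero.mpr (Nat.mul_ne_zero (by omega) (by omega)), hp.2⟩,
      by constructor <;> first | trivial | exact Nat.mul_ne_zero (by omega) (by omega)⟩
  · rintro ⟨d, k, l⟩ hd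
    simp only [Finset.mem_sigma, Nat.mem_divisorsAntidiagonal] at hd
    simp [hd.2.1]
  · rintro ⟨k, l⟩ _; rfl
  · rintro ⟨d, k, l⟩ _; rfl

open ArithmeticFunction in
lemma collapse_sum (S : ℕ → ℂ) (hS0 : S 0 = 0) (M : ℕ) (D : ℕ) (hD : D ≠ 0) :
    ∑ p ∈ D.divisorsAntidiagonal, ((moebius p.1 : ℤ) : ℂ) *
      (∑ q ∈ (p.2).divisorsAntidiagonal, (if q.1 ≤ M then S q.1 else 0))
    = if D ≤ M then S D else 0 := by
  classical
  set F : ArithmeticFunction ℂ := ⟨fun k => if k ≤ M then S k else 0, by simp [hS0]⟩ with hF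
  have hFq : ∀ q : ℕ, F q = if q ≤ M then S q else 0 := fun q => rfl
  have h1 : ∀ p ∈ D.divisorsAntidiagonal,
      ((moebius p.1 : ℤ) : ℂ) *
        (∑ q ∈ (p.2).divisorsAntidiagonal, (if q.1 ≤ M then S q.1 else 0))
      = ((moebius : ArithmeticFunction ℂ) p.1) * ((F * (ArithmeticFunction.zeta : ArithmeticFunction ℂ)) p.2) := by
    intro p hp
    rw [ArithmeticFunction.mul_apply]
    congr 1
    refine Finset.sum_congr rfl fun q hq => ?_
    obtain ⟨hq1, hq0⟩ := Nat.mem_divisorsAntidiagonal.mp hq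
    have hq2 : q.2 ≠ 0 := fun h0 => hq0 (by rw [← hq1, h0, mul_zero])
    simp [hFq, natCoe_apply, zeta_apply, hq2]
  rw [Finset.sum_congr rfl h1, ← ArithmeticFunction.mul_apply,
    mul_comm F ((ArithmeticFunction.zeta : ArithmeticFunction ℂ)), ← mul_assoc, coe_moebius_mul_coe_zeta, one_mul, hFq]

/-- Lemma 3.1: with `Ψ` supported in `[ψ₀, ψ₁]`, `C > ψ₁/ψ₀` and `K = ψ₁Q/C`,
`Δ''(m,n) = −∑_{c ≤ C} ∑_{l, (cl,mn)=1} μ(c) ∑_{k ≤ K} (Ψ(ckl/Q)/φ(ckl)) ∑*_{χ (k)} χ(m) conj(χ(n))`. -/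
theorem deltaPP_switched (Ψ : ℝ → ℝ) (ψ₀ ψ₁ : ℝ) (hψ₀ : 0 < ψ₀) (hψ : ψ₀ < ψ₁)
    (hΨ : ContDiff ℝ (⊤ : ℕ∞) Ψ) (hΨsupp : Function.support Ψ ⊆ Set.Icc ψ₀ ψ₁)
    (Q C : ℝ) (hQ : 1 ≤ Q) (hC : ψ₁ / ψ₀ < C)
    (K : ℝ) (hK : K = ψ₁ * Q / C)
    (m n : ℕ) (hm : 0 < m) (hn : 0 < n) :
    DeltaPP Ψ Q C m n =
      - ∑' c : ℕ, ∑' l : ℕ,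
          (if 1 ≤ c ∧ 1 ≤ l ∧ (c : ℝ) ≤ C ∧ Nat.gcd (c * l) (m * n) = 1 then
            ((ArithmeticFunction.moebius c : ℤ) : ℂ) *
              ∑ k ∈ Finset.Icc 1 ⌊K⌋₊,
                ((Ψ ((c : ℝ) * (k : ℝ) * (l : ℝ) / Q) /
                    (Nat.totient (c * k * l) : ℝ) : ℝ) : ℂ) *
                  primSum k (fun χ => χ (m : ZMod k) * (starRingEnd ℂ) (χ (n : ZMod k)))
          else 0) := by
  classical
  have hQ0 : (0:ℝ) < Q := lt_of_lt_of_le one_pos hQ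
  have hψ₁0 : 0 < ψ₁ := hψ₀.trans hψ
  have hC1 : 1 < C := lt_trans (by rw [lt_div_iff₀ hψ₀]; linarith) hC
  have hC0 : 0 < C := lt_trans one_pos hC1
  have hΨz : ∀ x : ℝ, x ∉ Set.Icc ψ₀ ψ₁ → Ψ x = 0 := fun x hx => by
    by_contra h; exact hx (hΨsupp h)
  have hKpos : 0 < K := by rw [hK]; positivity
  have hψ₁C : ψ₁ < C * ψ₀ := by rw [div_lt_iff₀ hψ₀] at hC; linarith
  have hKlt : K < ψ₀ * Q := by rw [hK, div_lt_iff₀ hC0]; nlinarith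
  have hCK : C * K = ψ₁ * Q := by rw [hK]; field_simp
  set N := ⌊ψ₁ * Q⌋₊ with hN
  set M := ⌊K⌋₊ with hM
  have hMN : M ≤ N := Nat.floor_mono (by rw [hK, div_le_iff₀ hC0]; nlinarith [mul_pos hψ₁0 hQ0])
  have hNlt : (ψ₁ * Q) < N + 1 := Nat.lt_floor_add_one _
  have hMK : (M:ℝ) ≤ K := Nat.floor_le hKpos.le
  have hKM1 : K < M + 1 := Nat.lt_floor_add_one _
  set S : ℕ → ℂ := fun k =>
    primSum k (fun χ => χ (m : ZMod k) * (starRingEnd ℂ) (χ (n : ZMod k))) with hS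
  have hS0 : S 0 = 0 := by rw [hS]; simp [primSum]
  set H : ℕ → ℂ := fun D => if Nat.gcd D (m * n) = 1
    then (((Ψ ((D:ℝ)/Q) / (Nat.totient D : ℝ)) : ℝ) : ℂ) else 0 with hH
  have hΨ0 : ∀ x : ℝ, (x < ψ₀ * Q ∨ ψ₁ * Q < x) → Ψ (x / Q) = 0 := by
    intro x hx
    apply hΨz
    rw [Set.mem_Icc]
    rcases hx with h | h
    · rintro ⟨h1, -⟩; rw [le_div_iff₀ hQ0] at h1; linarith
    · rintro ⟨-, h2⟩; rw [div_le_iff₀ hQ0] at h2; linarith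
  have hHlo : ∀ D : ℕ, (D:ℝ) < ψ₀ * Q → H D = 0 := by
    intro D hD
    rw [hH]
    simp only [hΨ0 (D:ℝ) (Or.inl hD), zero_div, Complex.ofReal_zero, ite_self]
  have hHhi : ∀ D : ℕ, ψ₁ * Q < (D:ℝ) → H D = 0 := by
    intro D hD
    rw [hH]
    simp only [hΨ0 (D:ℝ) (Or.inr hD), zero_div, Complex.ofReal_zero, ite_self]
  have hHN : ∀ D : ℕ, N < D → H D = 0 := by
    intro D h
    refine hHhi D ?_
    have : (N:ℝ) + 1 ≤ (D:ℝ) := by exact_mod_cast Nat.succ_le_of_lt h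
    linarith
  set G : ℕ → ℕ → ℕ → ℂ := fun c k l =>
    ((ArithmeticFunction.moebius c : ℤ):ℂ) * S k * H (c*k*l) with hG
  set box := Finset.Icc 1 N with hbox
  have hpull : ∀ (P : Prop) [Decidable P] (s : Finset ℕ) (f : ℕ → ℂ),
      (∑ x ∈ s, if P then f x else 0) = if P then ∑ x ∈ s, f x else 0 := by
    intro P _ s f; split_ifs <;> simp
  -- generic double-tsum to double-finsum conversion
  have key : ∀ (F : ℕ → ℕ → ℂ), (∀ c d, d ∉ box → F c d = 0) →
      (∀ c, c ∉ box → ∀ d, F c d = 0) →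
      (∑' c : ℕ, ∑' d : ℕ, F c d) = ∑ c ∈ box, ∑ d ∈ box, F c d := by
    intro F h1 h2
    have hin : ∀ c, (∑' d : ℕ, F c d) = ∑ d ∈ box, F c d := fun c =>
      tsum_eq_sum (fun d hd => h1 c d hd)
    rw [tsum_eq_sum (s := box) (fun c hc => by
      rw [hin c]; exact Finset.sum_eq_zero fun d _ => h2 c hc d)]
    exact Finset.sum_congr rfl fun c _ => hin c
  -- Step A: LHS as finite double sum with cleaned-up terms
  have hstepA : DeltaPP Ψ Q C m n = ∑ c ∈ box, ∑ d ∈ box,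
      (if C < (c:ℝ) then ((ArithmeticFunction.moebius c : ℤ):ℂ) * H (c*d) *
        (if (d:ℤ) ∣ ((m:ℤ) - (n:ℤ)) then (Nat.totient d : ℂ) else 0) else 0) := by
    rw [DeltaPP]
    have hvan1 : ∀ c d : ℕ, d ∉ box →
        (if 1 ≤ d ∧ C < (c : ℝ) ∧ Nat.gcd (c * d) (m * n) = 1 ∧ (d : ℤ) ∣ ((m : ℤ) - (n : ℤ))
        then ((Ψ ((c : ℝ) * (d : ℝ) / Q) * ((ArithmeticFunction.moebius c : ℤ) : ℝ) *
            (Nat.totient d : ℝ) / (Nat.totient (c * d) : ℝ) : ℝ) : ℂ) else 0) = 0 := by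
      intro c d hd
      rw [Finset.mem_Icc, not_and_or, not_le, not_le] at hd
      split_ifs with hcond
      · obtain ⟨hd1, hCc, -, -⟩ := hcond
        have hdN : N < d := by omega
        have hc1 : (1:ℝ) ≤ (c:ℝ) := by
          have : (0:ℕ) < c := by
            by_contra hc0
            push_neg at hc0
            interval_cases c
            simp at hCc; linarith
          exact_mod_cast this
        have hΨz' : Ψ ((c:ℝ) * (d:ℝ) / Q) = 0 := by
          apply hΨ0
          right
          have hdR : (N:ℝ) + 1 ≤ (d:ℝ) := by exact_mod_cast Nat.succ_le_of_lt hdN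
          nlinarith
        rw [hΨz']
        simp
      · rfl
    have hvan2 : ∀ c : ℕ, c ∉ box → ∀ d : ℕ,
        (if 1 ≤ d ∧ C < (c : ℝ) ∧ Nat.gcd (c * d) (m * n) = 1 ∧ (d : ℤ) ∣ ((m : ℤ) - (n : ℤ))
        then ((Ψ ((c : ℝ) * (d : ℝ) / Q) * ((ArithmeticFunction.moebius c : ℤ) : ℝ) *
            (Nat.totient d : ℝ) / (Nat.totient (c * d) : ℝ) : ℝ) : ℂ) else 0) = 0 := by
      intro c hc d
      rw [Finset.mem_Icc, not_and_or, not_le, not_le] at hc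
      split_ifs with hcond
      · obtain ⟨hd1, hCc, -, -⟩ := hcond
        have hcN : N < c := by
          rcases hc with h | h
          · interval_cases c; simp at hCc; linarith
          · exact h
        have hd1' : (1:ℝ) ≤ (d:ℝ) := by exact_mod_cast hd1
        have hΨz' : Ψ ((c:ℝ) * (d:ℝ) / Q) = 0 := by
          apply hΨ0
          right
          have hcR : (N:ℝ) + 1 ≤ (c:ℝ) := by exact_mod_cast Nat.succ_le_of_lt hcN
          nlinarith
        rw [hΨz']
        simp
      · rfl
    rw [key _ hvan1 hvan2]
    refine Finset.sum_congr rfl fun c _ => Finset.sum_congr rfl fun d hd => ?_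
    have hd1 : 1 ≤ d := (Finset.mem_Icc.mp hd).1
    by_cases hCc : C < (c:ℝ)
    · by_cases hg : Nat.gcd (c * d) (m * n) = 1
      · by_cases hdvd : (d:ℤ) ∣ ((m:ℤ) - (n:ℤ))
        · rw [if_pos ⟨hd1, hCc, hg, hdvd⟩, if_pos hCc, if_pos hdvd]
          simp only [hH, if_pos hg]
          push_cast
          ring
        · rw [if_neg (by tauto), if_pos hCc, if_neg hdvd, mul_zero]
      · rw [if_neg (by tauto), if_pos hCc]
        simp only [hH, if_neg hg]
        ring
    · rw [if_neg (by tauto), if_neg hCc]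
  -- Step B
  have hstepB : ∀ c ∈ box,
      (∑ d ∈ box, ((ArithmeticFunction.moebius c : ℤ):ℂ) * H (c*d) *
        (if (d:ℤ) ∣ ((m:ℤ) - (n:ℤ)) then (Nat.totient d : ℂ) else 0))
      = ∑ k ∈ box, ∑ l ∈ box, G c k l := by
    intro c hc
    have hc1 : 1 ≤ c := (Finset.mem_Icc.mp hc).1
    have h1 : ∀ d ∈ box, ((ArithmeticFunction.moebius c : ℤ):ℂ) * H (c*d) *
        (if (d:ℤ) ∣ ((m:ℤ) - (n:ℤ)) then (Nat.totient d : ℂ) else 0)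
        = ((ArithmeticFunction.moebius c : ℤ):ℂ) * H (c*d) * ∑ k ∈ d.divisors, S k := by
      intro d hd
      have hd1 : 0 < d := (Finset.mem_Icc.mp hd).1
      by_cases hg : Nat.gcd d (m * n) = 1
      · rw [hS]
        rw [sum_divisors_primSum m n d hd1 hg]
      · have hH0 : H (c*d) = 0 := by
          simp only [hH]
          rw [if_neg]
          intro hcd
          exact hg (Nat.Coprime.coprime_dvd_left (dvd_mul_left d c) hcd)
        rw [hH0]
        ring
    rw [Finset.sum_congr rfl h1]
    have h2 : ∀ d ∈ box, ((ArithmeticFunction.moebius c : ℤ):ℂ) * H (c*d) *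
        (∑ k ∈ d.divisors, S k)
        = ∑ p ∈ d.divisorsAntidiagonal,
            ((ArithmeticFunction.moebius c : ℤ):ℂ) * S p.1 * H (c*(p.1*p.2)) := by
      intro d hd
      have e1 : ∑ p ∈ d.divisorsAntidiagonal,
            ((ArithmeticFunction.moebius c : ℤ):ℂ) * S p.1 * H (c*(p.1*p.2))
          = ∑ p ∈ d.divisorsAntidiagonal,
            ((ArithmeticFunction.moebius c : ℤ):ℂ) * S p.1 * H (c*d) := by
        refine Finset.sum_congr rfl fun p hp => ?_
        rw [(Nat.mem_divisorsAntidiagonal.mp hp).1]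
      rw [e1, Nat.sum_divisorsAntidiagonal
        (f := fun k _ => ((ArithmeticFunction.moebius c : ℤ):ℂ) * S k * H (c*d)),
        Finset.mul_sum]
      exact Finset.sum_congr rfl fun k _ => by ring
    rw [Finset.sum_congr rfl h2]
    rw [sum_antidiag_box N
      (fun k l => ((ArithmeticFunction.moebius c : ℤ):ℂ) * S k * H (c*(k*l)))
      (fun k l hk hl hkl => by
        try dsimp only
        rw [hHN (c*(k*l)) (lt_of_lt_of_le hkl (Nat.le_mul_of_pos_left _ hc1))]
        ring)]
    exact Finset.sum_congr rfl fun k _ => Finset.sum_congr rfl fun l _ => by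
      rw [hG, ← mul_assoc c k l]
  -- combined LHS
  have hLHS : DeltaPP Ψ Q C m n
      = ∑ c ∈ box, ∑ k ∈ box, ∑ l ∈ box, (if C < (c:ℝ) then G c k l else 0) := by
    rw [hstepA]
    refine Finset.sum_congr rfl fun c hc => ?_
    by_cases hCc : C < (c:ℝ)
    · simp only [if_pos hCc]
      exact hstepB c hc
    · simp only [if_neg hCc]
      simp
  -- Step: full filtered sum vanishes
  have hzero : ∑ c ∈ box, ∑ k ∈ box, ∑ l ∈ box, (if k ≤ M then G c k l else 0) = 0 := by
    have hinner : ∀ c ∈ box, ∑ k ∈ box, ∑ l ∈ box, (if k ≤ M then G c k l else 0)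
        = ∑ e ∈ box, ((ArithmeticFunction.moebius c : ℤ):ℂ) * H (c*e) *
            (∑ p ∈ e.divisorsAntidiagonal, (if p.1 ≤ M then S p.1 else 0)) := by
      intro c hc
      have hc1 : 1 ≤ c := (Finset.mem_Icc.mp hc).1
      have hGkl : ∀ k l : ℕ, (if k ≤ M then G c k l else 0)
          = (if k ≤ M then ((ArithmeticFunction.moebius c : ℤ):ℂ) * S k * H (c*(k*l)) else 0) := by
        intro k l
        by_cases h : k ≤ M
        · simp only [if_pos h, hG]
          rw [mul_assoc c k l]
        · simp [h]
      simp only [hGkl]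
      rw [← sum_antidiag_box N
        (fun k l => if k ≤ M then ((ArithmeticFunction.moebius c : ℤ):ℂ) * S k * H (c*(k*l)) else 0)
        (fun k l hk hl hkl => by
          try dsimp only
          rw [hHN (c*(k*l)) (lt_of_lt_of_le hkl (Nat.le_mul_of_pos_left _ hc1))]
          split_ifs <;> ring)]
      refine Finset.sum_congr rfl fun e he => ?_
      rw [Finset.mul_sum]
      refine Finset.sum_congr rfl fun p hp => ?_
      rw [(Nat.mem_divisorsAntidiagonal.mp hp).1]
      by_cases h : p.1 ≤ M
      · simp only [if_pos h]; ring
      · simp only [if_neg h]; ring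
    rw [Finset.sum_congr rfl hinner]
    rw [← sum_antidiag_box N
      (fun c e => ((ArithmeticFunction.moebius c : ℤ):ℂ) * H (c*e) *
        (∑ p ∈ e.divisorsAntidiagonal, (if p.1 ≤ M then S p.1 else 0)))
      (fun c e hc he hce => by
        try dsimp only
        rw [hHN (c*e) hce]
        ring)]
    refine Finset.sum_eq_zero fun D hD => ?_
    have hD1 : 1 ≤ D := (Finset.mem_Icc.mp hD).1
    have hcol : ∑ p ∈ D.divisorsAntidiagonal,
        ((ArithmeticFunction.moebius p.1 : ℤ):ℂ) * H (p.1*p.2) *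
          (∑ q ∈ (p.2).divisorsAntidiagonal, (if q.1 ≤ M then S q.1 else 0))
        = H D * (if D ≤ M then S D else 0) := by
      have e1 : ∀ p ∈ D.divisorsAntidiagonal,
          ((ArithmeticFunction.moebius p.1 : ℤ):ℂ) * H (p.1*p.2) *
            (∑ q ∈ (p.2).divisorsAntidiagonal, (if q.1 ≤ M then S q.1 else 0))
          = H D * (((ArithmeticFunction.moebius p.1 : ℤ):ℂ) *
            (∑ q ∈ (p.2).divisorsAntidiagonal, (if q.1 ≤ M then S q.1 else 0))) := by
        intro p hp
        rw [(Nat.mem_divisorsAntidiagonal.mp hp).1]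
        ring
      rw [Finset.sum_congr rfl e1, ← Finset.mul_sum,
        collapse_sum S hS0 M D (by omega)]
    rw [hcol]
    by_cases hDM : D ≤ M
    · rw [hHlo D (by
        have : (D:ℝ) ≤ (M:ℝ) := by exact_mod_cast hDM
        linarith), zero_mul]
    · rw [if_neg hDM, mul_zero]
  -- automatic restriction k ≤ M when C < c
  have hGzero_k : ∀ c k l : ℕ, 1 ≤ l → C < (c:ℝ) → M < k → G c k l = 0 := by
    intro c k l hl hCc hMk
    have hkK : K < (k:ℝ) := by
      have : (M:ℝ) + 1 ≤ (k:ℝ) := by exact_mod_cast Nat.succ_le_of_lt hMk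
      linarith
    have hl1 : (1:ℝ) ≤ (l:ℝ) := by exact_mod_cast hl
    have hH0 : H (c*k*l) = 0 := by
      apply hHhi
      push_cast
      nlinarith [mul_lt_mul'' hCc hkK hC0.le hKpos.le, mul_pos (hC0.trans hCc) (hKpos.trans hkK)]
    rw [hG]
    try dsimp only
    rw [hH0]
    ring
  have hsub : DeltaPP Ψ Q C m n
      = - ∑ c ∈ box, ∑ k ∈ box, ∑ l ∈ box,
          (if (c:ℝ) ≤ C ∧ k ≤ M then G c k l else 0) := by
    rw [hLHS]
    have e1 : ∀ c ∈ box, ∀ k ∈ box, ∀ l ∈ box,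
        (if C < (c:ℝ) then G c k l else 0)
        = (if k ≤ M then G c k l else 0) - (if (c:ℝ) ≤ C ∧ k ≤ M then G c k l else 0) := by
      intro c _ k _ l hl
      have hl1 : 1 ≤ l := (Finset.mem_Icc.mp hl).1
      by_cases hCc : C < (c:ℝ)
      · rw [if_pos hCc, if_neg (show ¬((c:ℝ) ≤ C ∧ k ≤ M) from fun h => absurd hCc (not_lt.mpr h.1)), sub_zero]
        by_cases hk : k ≤ M
        · rw [if_pos hk]
        · rw [if_neg hk, hGzero_k c k l hl1 hCc (not_le.mp hk)]
      · rw [if_neg hCc]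
        have : (c:ℝ) ≤ C := not_lt.mp hCc
        by_cases hk : k ≤ M
        · rw [if_pos hk, if_pos ⟨this, hk⟩, sub_self]
        · rw [if_neg hk, if_neg (fun h => hk h.2), sub_self]
    calc ∑ c ∈ box, ∑ k ∈ box, ∑ l ∈ box, (if C < (c:ℝ) then G c k l else 0)
        = ∑ c ∈ box, ∑ k ∈ box, ∑ l ∈ box,
            ((if k ≤ M then G c k l else 0) - (if (c:ℝ) ≤ C ∧ k ≤ M then G c k l else 0)) := by
          refine Finset.sum_congr rfl fun c hc => Finset.sum_congr rfl fun k hk =>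
            Finset.sum_congr rfl fun l hl => e1 c hc k hk l hl
      _ = (∑ c ∈ box, ∑ k ∈ box, ∑ l ∈ box, (if k ≤ M then G c k l else 0))
          - ∑ c ∈ box, ∑ k ∈ box, ∑ l ∈ box, (if (c:ℝ) ≤ C ∧ k ≤ M then G c k l else 0) := by
          simp only [Finset.sum_sub_distrib]
      _ = - ∑ c ∈ box, ∑ k ∈ box, ∑ l ∈ box, (if (c:ℝ) ≤ C ∧ k ≤ M then G c k l else 0) := by
          rw [hzero, zero_sub]
  rw [hsub]
  congr 1
  -- now the RHS
  have hfilter : box.filter (fun k => k ≤ M) = Finset.Icc 1 M := by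
    ext x
    simp only [Finset.mem_filter, Finset.mem_Icc, hbox]
    omega
  have hRHS : ∀ c ∈ box, ∀ l ∈ box,
      (if 1 ≤ c ∧ 1 ≤ l ∧ (c : ℝ) ≤ C ∧ Nat.gcd (c * l) (m * n) = 1 then
        ((ArithmeticFunction.moebius c : ℤ) : ℂ) *
          ∑ k ∈ Finset.Icc 1 M,
            ((Ψ ((c : ℝ) * (k : ℝ) * (l : ℝ) / Q) /
                (Nat.totient (c * k * l) : ℝ) : ℝ) : ℂ) * S k
      else 0)
      = ∑ k ∈ box, (if (c:ℝ) ≤ C ∧ k ≤ M then G c k l else 0) := by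
    intro c hc l hl
    have hc1 : 1 ≤ c := (Finset.mem_Icc.mp hc).1
    have hl1 : 1 ≤ l := (Finset.mem_Icc.mp hl).1
    by_cases hcC : (c:ℝ) ≤ C
    · by_cases hg : Nat.gcd (c * l) (m * n) = 1
      · rw [if_pos ⟨hc1, hl1, hcC, hg⟩]
        have e2 : ∀ k : ℕ, (if (c:ℝ) ≤ C ∧ k ≤ M then G c k l else 0)
            = (if k ≤ M then G c k l else 0) := by
          intro k
          by_cases hk : k ≤ M
          · rw [if_pos ⟨hcC, hk⟩, if_pos hk]
          · rw [if_neg (show ¬((c:ℝ) ≤ C ∧ k ≤ M) from fun h => hk h.2), if_neg hk]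
        simp only [e2]
        rw [← Finset.sum_filter, hfilter, Finset.mul_sum]
        refine Finset.sum_congr rfl fun k hk => ?_
        have hk1 : 1 ≤ k := (Finset.mem_Icc.mp hk).1
        by_cases hgk : Nat.gcd (c * k * l) (m * n) = 1
        · rw [hG]
          try dsimp only
          simp only [hH, if_pos hgk]
          push_cast
          ring
        · have hSk : S k = 0 := by
            rw [hS]
            refine primSum_eq_zero fun hkmn => ?_
            refine hgk ?_
            have h1 : Nat.Coprime (c * l) (m * n) := hg
            have h2 : Nat.Coprime k (m * n) := hkmn
            have := Nat.Coprime.mul h1 h2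
            rwa [show c * l * k = c * k * l by ring] at this
          rw [hG]
          try dsimp only
          rw [hSk]
          ring
      · rw [if_neg (fun h => hg h.2.2.2)]
        refine (Finset.sum_eq_zero fun k hk => ?_).symm
        have hH0 : H (c*k*l) = 0 := by
          simp only [hH]
          rw [if_neg]
          intro hcd
          refine hg (Nat.Coprime.coprime_dvd_left ⟨k, by ring⟩ hcd)
        rw [hG]
        try dsimp only
        rw [hH0, mul_zero]
        split_ifs <;> rfl
    · rw [if_neg (fun h => hcC h.2.2.1)]
      refine (Finset.sum_eq_zero fun k hk => ?_).symm
      rw [if_neg (fun h => hcC h.1)]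
  have hbig : ∀ c l : ℕ, (1 ≤ c ∧ 1 ≤ l) → (N < c ∨ N < l) →
      ∀ k : ℕ, 1 ≤ k → Ψ ((c : ℝ) * (k : ℝ) * (l : ℝ) / Q) = 0 := by
    intro c l hcl hN k hk
    refine hΨ0 _ (Or.inr ?_)
    have hc1 : (1:ℝ) ≤ (c:ℝ) := by exact_mod_cast hcl.1
    have hl1 : (1:ℝ) ≤ (l:ℝ) := by exact_mod_cast hcl.2
    have hk1 : (1:ℝ) ≤ (k:ℝ) := by exact_mod_cast hk
    rcases hN with h | h
    · have hcR : (N:ℝ) + 1 ≤ (c:ℝ) := by exact_mod_cast Nat.succ_le_of_lt h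
      have h2 : (1:ℝ) ≤ (k:ℝ)*(l:ℝ) := by nlinarith
      have h3 : (c:ℝ) ≤ (c:ℝ)*((k:ℝ)*(l:ℝ)) := le_mul_of_one_le_right (by linarith) h2
      rw [mul_assoc]
      linarith
    · have hlR : (N:ℝ) + 1 ≤ (l:ℝ) := by exact_mod_cast Nat.succ_le_of_lt h
      have h2 : (1:ℝ) ≤ (c:ℝ)*(k:ℝ) := by nlinarith
      have h3 : (l:ℝ) ≤ ((c:ℝ)*(k:ℝ))*(l:ℝ) := le_mul_of_one_le_left (by linarith) h2
      linarith
  have hvanR1 : ∀ c l : ℕ, l ∉ box →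
      (if 1 ≤ c ∧ 1 ≤ l ∧ (c : ℝ) ≤ C ∧ Nat.gcd (c * l) (m * n) = 1 then
        ((ArithmeticFunction.moebius c : ℤ) : ℂ) *
          ∑ k ∈ Finset.Icc 1 M,
            ((Ψ ((c : ℝ) * (k : ℝ) * (l : ℝ) / Q) /
                (Nat.totient (c * k * l) : ℝ) : ℝ) : ℂ) * S k
      else 0) = 0 := by
    intro c l hlb
    rw [Finset.mem_Icc, not_and_or, not_le, not_le] at hlb
    split_ifs with hcond
    · have hl1 := hcond.2.1
      have hlN : N < l := by omega
      rw [Finset.sum_eq_zero, mul_zero]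
      intro k hk
      rw [hbig c l ⟨hcond.1, hl1⟩ (Or.inr hlN) k (Finset.mem_Icc.mp hk).1]
      simp
    · rfl
  have hvanR2 : ∀ c : ℕ, c ∉ box → ∀ l : ℕ,
      (if 1 ≤ c ∧ 1 ≤ l ∧ (c : ℝ) ≤ C ∧ Nat.gcd (c * l) (m * n) = 1 then
        ((ArithmeticFunction.moebius c : ℤ) : ℂ) *
          ∑ k ∈ Finset.Icc 1 M,
            ((Ψ ((c : ℝ) * (k : ℝ) * (l : ℝ) / Q) /
                (Nat.totient (c * k * l) : ℝ) : ℝ) : ℂ) * S k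
      else 0) = 0 := by
    intro c hcb l
    rw [Finset.mem_Icc, not_and_or, not_le, not_le] at hcb
    split_ifs with hcond
    · have hc1 := hcond.1
      have hcN : N < c := by omega
      rw [Finset.sum_eq_zero, mul_zero]
      intro k hk
      rw [hbig c l ⟨hc1, hcond.2.1⟩ (Or.inl hcN) k (Finset.mem_Icc.mp hk).1]
      simp
    · rfl
  rw [key _ hvanR1 hvanR2]
  refine Finset.sum_congr rfl fun c hc => ?_
  rw [Finset.sum_comm]
  exact Finset.sum_congr rfl fun l hl => (hRHS c hc l hl).symm
end
end

section
/- Let a, s, l be positive integers with gcd(a, s) = 1. Then ∑_{u | l, u squarefree, gcd(u, a) = 1} μ(gcd(u, s)) φ(gcd(u, s)) / φ(u) equals φ(a)·l/φ(a·l) if gcd(l, s) = 1, and equals 0 otherwise. -/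
/-!
Both sides are multiplicative functions of `l`, so it suffices to compare them at prime powers
`p ^ (k + 1)`. The summand vanishes off squarefree `u`, so the left side there is `1 + g(p)`, with
`g(p) = 0` if `p ∣ a`, `g(p) = -1` if `p ∣ s`, and `g(p) = 1/(p-1)` otherwise; the right side is
`1`, `0` and `p/(p-1)` respectively, because `φ(a p^(k+1))` equals `p^(k+1) φ(a)` when `p ∣ a` and
`p^k (p-1) φ(a)` otherwise. Multiplicativity of `l ↦ φ(a) l / φ(a l)` comes from
`φ(a m) φ(a n) = φ(a) φ(a m n)` for coprime `m, n`.
-/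

open ArithmeticFunction Finset
open scoped Nat ArithmeticFunction.zeta ArithmeticFunction.Moebius

namespace ArithmeticFunction

theorem isMultiplicative_of_eq_ite {R : Type*} [MonoidWithZero R] {f : ArithmeticFunction R}
    (P : ℕ → Prop) [DecidablePred P] (F : ℕ → R) (hf : ∀ n, f n = if P n then F n else 0)
    (hP1 : P 1) (hF1 : F 1 = 1) (hP : ∀ {m n}, m.Coprime n → (P (m * n) ↔ P m ∧ P n))
    (hF : ∀ {m n}, m.Coprime n → F (m * n) = F m * F n) : f.IsMultiplicative := by
  refine ⟨by simp [hf, hP1, hF1], fun {m n} hmn => ?_⟩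
  simp only [hf, hP hmn, hF hmn]
  split_ifs <;> simp_all

theorem coe_zeta_mul_apply_prime_pow_succ {R : Type*} [Semiring R] {f : ArithmeticFunction R}
    (hf : ∀ n, ¬Squarefree n → f n = 0) {p : ℕ} (hp : p.Prime) (k : ℕ) :
    ((ζ : ArithmeticFunction ℕ) * f) (p ^ (k + 1)) = f 1 + f p := by
  have hsq : ∀ j, ¬Squarefree (p ^ (j + 2)) := fun j h =>
    absurd ((Nat.squarefree_pow_iff hp.ne_one (by omega)).1 h).2 (by omega)
  rw [coe_zeta_mul_apply, Nat.sum_divisors_prime_pow hp, sum_range_succ', sum_range_succ',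
    sum_eq_zero fun j _ => hf _ (hsq j)]
  simp [add_comm]

end ArithmeticFunction

theorem Nat.totient_mul_mul_totient_mul {m n : ℕ} (a : ℕ) (hmn : m.Coprime n) :
    φ (a * m) * φ (a * n) = φ a * φ (a * m * n) := by
  rcases Nat.eq_zero_or_pos a with rfl | ha
  · simp
  have h₁ := Nat.totient_gcd_mul_totient_mul (a * m) (a * n)
  have h₂ := Nat.totient_gcd_mul_totient_mul a (a * m * n)
  rw [Nat.gcd_eq_left ⟨m * n, by ring⟩] at h₂
  rw [Nat.gcd_mul_left, hmn.gcd_eq_one, mul_one, show a * m * (a * n) = a * (a * m * n) by ring,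
    h₂] at h₁
  exact (Nat.eq_of_mul_eq_mul_right ha (by linarith [h₁])).symm

theorem Nat.totient_mul_prime_pow_succ (n : ℕ) {p : ℕ} (hp : p.Prime) (k : ℕ) :
    φ (n * p ^ (k + 1)) = p ^ k * φ (n * p) := by
  induction k with
  | zero => simp
  | succ k ih =>
    rw [show n * p ^ (k + 2) = p * (n * p ^ (k + 1)) by ring,
      Nat.totient_mul_of_prime_of_dvd hp (dvd_mul_of_dvd_right (dvd_pow_self p (by omega)) n), ih]
    ring

theorem Nat.cast_totient_mul_prime (n : ℕ) {p : ℕ} (hp : p.Prime) :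
    (φ (n * p) : ℝ) = (if p ∣ n then (p : ℝ) else p - 1) * φ n := by
  rw [mul_comm n]
  split_ifs with h
  · exact_mod_cast Nat.totient_mul_of_prime_of_dvd hp h
  · rw [Nat.totient_mul_of_prime_of_not_dvd hp h, Nat.cast_mul, Nat.cast_pred hp.pos]

noncomputable def totientRatio (a l : ℕ) : ℝ := (φ a : ℝ) * (l : ℝ) / (φ (a * l) : ℝ)

theorem totientRatio_mul {a m n : ℕ} (ha : 0 < a) (hmn : m.Coprime n) :
    totientRatio a (m * n) = totientRatio a m * totientRatio a n := by
  unfold totientRatio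
  have hφa : (φ a : ℝ) ≠ 0 := by exact_mod_cast (Nat.totient_pos.2 ha).ne'
  have key : (φ (a * m) : ℝ) * φ (a * n) = φ a * φ (a * m * n) := by
    exact_mod_cast Nat.totient_mul_mul_totient_mul a hmn
  rw [div_mul_div_comm, key, ← mul_assoc a, Nat.cast_mul,
    show (φ a : ℝ) * m * (φ a * n) = φ a * (φ a * (m * n)) by ring, mul_div_mul_left _ _ hφa]

theorem totientRatio_prime_pow_succ {a p : ℕ} (ha : 0 < a) (hp : p.Prime) (k : ℕ) :
    totientRatio a (p ^ (k + 1)) = if p ∣ a then 1 else (p : ℝ) / (p - 1) := by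
  have hφa : (φ a : ℝ) ≠ 0 := by exact_mod_cast (Nat.totient_pos.2 ha).ne'
  have hp0 : (p : ℝ) ≠ 0 := by exact_mod_cast hp.ne_zero
  rw [totientRatio, Nat.totient_mul_prime_pow_succ a hp, Nat.cast_mul,
    Nat.cast_totient_mul_prime a hp]
  push_cast
  split_ifs
  · field_simp
    ring
  · have hp1 : (p : ℝ) - 1 ≠ 0 := sub_ne_zero.2 (by exact_mod_cast hp.ne_one)
    field_simp
    ring

noncomputable def squarefreeWeight (a s : ℕ) : ArithmeticFunction ℝ :=
  ⟨fun u => if Squarefree u ∧ Nat.gcd u a = 1 then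
      ((μ (Nat.gcd u s) : ℤ) : ℝ) * (φ (Nat.gcd u s) : ℝ) / (φ u : ℝ)
    else 0, by simp [not_squarefree_zero]⟩

noncomputable def coprimeTotientRatio (a s : ℕ) : ArithmeticFunction ℝ :=
  ⟨fun l => if Nat.gcd l s = 1 then totientRatio a l else 0, by simp [totientRatio]⟩

theorem isMultiplicative_squarefreeWeight (a s : ℕ) : (squarefreeWeight a s).IsMultiplicative := by
  refine isMultiplicative_of_eq_ite _ _ (fun _ => rfl) (by simp) (by simp) ?_ ?_
  · intro m n hmn
    simp only [Nat.squarefree_mul hmn, ← Nat.coprime_iff_gcd_eq_one, Nat.coprime_mul_iff_left]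
    tauto
  · intro m n hmn
    have hgcd : Nat.gcd (m * n) s = Nat.gcd m s * Nat.gcd n s := by
      simp only [Nat.gcd_comm _ s]
      exact hmn.gcd_mul s
    have hcop : (Nat.gcd m s).Coprime (Nat.gcd n s) := (hmn.coprime_dvd_left
      (Nat.gcd_dvd_left m s)).coprime_dvd_right (Nat.gcd_dvd_left n s)
    rw [hgcd, isMultiplicative_moebius.map_mul_of_coprime hcop, Nat.totient_mul hcop,
      Nat.totient_mul hmn]
    push_cast
    ring

theorem isMultiplicative_coprimeTotientRatio {a : ℕ} (ha : 0 < a) (s : ℕ) :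
    (coprimeTotientRatio a s).IsMultiplicative :=
  isMultiplicative_of_eq_ite _ _ (fun _ => rfl) (by simp)
    (by simp [totientRatio, (Nat.totient_pos.2 ha).ne'])
    (fun _ => Nat.coprime_mul_iff_left) (fun hmn => totientRatio_mul ha hmn)

theorem coe_zeta_mul_squarefreeWeight_prime_pow_succ {a s p : ℕ} (ha : 0 < a)
    (has : Nat.gcd a s = 1) (hp : p.Prime) (k : ℕ) :
    ((ζ : ArithmeticFunction ℕ) * squarefreeWeight a s) (p ^ (k + 1)) =
      coprimeTotientRatio a s (p ^ (k + 1)) := by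
  have hsupp : ∀ n, ¬Squarefree n → squarefreeWeight a s n = 0 := fun n hn => if_neg (by tauto)
  rw [coe_zeta_mul_apply_prime_pow_succ hsupp hp, isMultiplicative_squarefreeWeight a s |>.map_one]
  simp only [squarefreeWeight, coprimeTotientRatio, coe_mk, ← Nat.coprime_iff_gcd_eq_one,
    Nat.coprime_pow_left_iff (Nat.succ_pos k), hp.coprime_iff_not_dvd, hp.squarefree, true_and]
  by_cases hps : p ∣ s
  · have hpa : ¬p ∣ a := fun hpa =>
      hp.one_lt.ne' (Nat.eq_one_of_dvd_one (has ▸ Nat.dvd_gcd hpa hps))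
    have hφp : (φ p : ℝ) ≠ 0 := by exact_mod_cast (Nat.totient_pos.2 hp.pos).ne'
    simp [hpa, hps, Nat.gcd_eq_left hps, moebius_apply_prime hp, hφp]
  rw [if_pos hps, totientRatio_prime_pow_succ ha hp]
  split_ifs
  · simp
  · have hp1 : (p : ℝ) - 1 ≠ 0 := sub_ne_zero.2 (by exact_mod_cast hp.ne_one)
    rw [Nat.Coprime.gcd_eq_one (hp.coprime_iff_not_dvd.2 hps), Nat.totient_prime hp,
      Nat.cast_pred hp.pos]
    field_simp
    simp

theorem squarefree_divisor_sum_eval_general (a s l : ℕ) (ha : 0 < a)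
    (has : Nat.gcd a s = 1) :
    (∑ u ∈ l.divisors,
        if Squarefree u ∧ Nat.gcd u a = 1 then
          ((ArithmeticFunction.moebius (Nat.gcd u s) : ℤ) : ℝ) *
            (Nat.totient (Nat.gcd u s) : ℝ) / (Nat.totient u : ℝ)
        else 0) =
      if Nat.gcd l s = 1 then
        (Nat.totient a : ℝ) * (l : ℝ) / (Nat.totient (a * l) : ℝ)
      else 0 := by
  have hmul : (ζ : ArithmeticFunction ℕ) * squarefreeWeight a s = coprimeTotientRatio a s :=
    (IsMultiplicative.eq_iff_eq_on_prime_powers _ (isMultiplicative_zeta.natCast.mul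
      (isMultiplicative_squarefreeWeight a s)) _ (isMultiplicative_coprimeTotientRatio ha s)).2
      fun p i hp => by
        rcases i with _ | k
        · simp [(isMultiplicative_squarefreeWeight a s).map_one,
          (isMultiplicative_coprimeTotientRatio ha s).map_one]
        · exact coe_zeta_mul_squarefreeWeight_prime_pow_succ ha has hp k
  calc _ = ((ζ : ArithmeticFunction ℕ) * squarefreeWeight a s) l := coe_zeta_mul_apply.symm
    _ = _ := by rw [hmul]; rfl

/-- Lemma 4.1: for positive integers `a, s, l` with `gcd(a, s) = 1`,
`∑_{u ∣ l, u squarefree, gcd(u,a) = 1} μ(gcd(u,s)) φ(gcd(u,s)) / φ(u)`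
equals `φ(a)·l/φ(a·l)` if `gcd(l, s) = 1` and `0` otherwise. -/
theorem squarefree_divisor_sum_eval (a s l : ℕ) (ha : 0 < a) (hs : 0 < s) (hl : 0 < l)
    (has : Nat.gcd a s = 1) :
    (∑ u ∈ l.divisors,
        if Squarefree u ∧ Nat.gcd u a = 1 then
          ((ArithmeticFunction.moebius (Nat.gcd u s) : ℤ) : ℝ) *
            (Nat.totient (Nat.gcd u s) : ℝ) / (Nat.totient u : ℝ)
        else 0) =
      if Nat.gcd l s = 1 then
        (Nat.totient a : ℝ) * (l : ℝ) / (Nat.totient (a * l) : ℝ)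
      else 0 :=
  squarefree_divisor_sum_eval_general a s l ha has
end

section
/- For all positive integers m, n and every squarefree positive integer u, μ(gcd(u, mn)) φ(gcd(u, mn)) = ∑∑∑_{α, β, γ ≥ 1: αβγ | u, αβ | m, αγ | n} αβγ · μ(βγ). -/
/-!
Both sides are multiplicative in `u`: for coprime `a, b`, every divisor of `a * b` splits uniquely
as a divisor of `a` times a divisor of `b`, and the summand factors accordingly because the
divisibility conditions and `μ` split over coprime factors. A squarefree `u` is a product of
distinct primes, so it suffices to compare the two sides at a prime `p`. There only triples with
at most one entry `p` survive, giving `1 - p·[p ∣ m] - p·[p ∣ n] + p·[p ∣ m ∧ p ∣ n]`, which is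
`1 - p = μ(p) φ(p)` when `p ∣ m * n` and `1` otherwise.
-/

open Finset ArithmeticFunction
open scoped ArithmeticFunction.Moebius

theorem Nat.eq_of_squarefree_of_multiplicative {M : Type*} [CommMonoid M] {f g : ℕ → M}
    (hf : ∀ a b, a.Coprime b → f (a * b) = f a * f b) (hf₁ : f 1 = 1)
    (hg : ∀ a b, a.Coprime b → g (a * b) = g a * g b) (hg₁ : g 1 = 1)
    (hfg : ∀ p, p.Prime → f p = g p) {n : ℕ} (hn : Squarefree n) : f n = g n := by
  rw [Nat.multiplicative_factorization f hf hf₁ hn.ne_zero,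
    Nat.multiplicative_factorization g hg hg₁ hn.ne_zero]
  refine Finsupp.prod_congr fun p hp => ?_
  have hp' : p.Prime := Nat.prime_of_mem_primeFactors hp
  have hexp : n.factorization p = 1 :=
    le_antisymm (hn.natFactorization_le_one p) (Finsupp.mem_support_iff.mp hp |>.bot_lt)
  rw [hexp, pow_one, hfg p hp']

theorem Nat.Coprime.sum_divisors_mul_eq_sum_sum {M : Type*} [AddCommMonoid M] {a b : ℕ}
    (hab : a.Coprime b) (f : ℕ → M) :
    ∑ d ∈ (a * b).divisors, f d = ∑ d₁ ∈ a.divisors, ∑ d₂ ∈ b.divisors, f (d₁ * d₂) := by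
  rw [Nat.divisors_mul, Finset.mul_def, sum_image hab.mul_injOn_divisors, sum_product]

theorem moebius_mul_totient_gcd_mul_of_coprime (k : ℕ) {a b : ℕ} (hab : a.Coprime b) :
    (μ (Nat.gcd (a * b) k) : ℤ) * Nat.totient (Nat.gcd (a * b) k) =
      (μ (Nat.gcd a k) * Nat.totient (Nat.gcd a k)) *
        (μ (Nat.gcd b k) * Nat.totient (Nat.gcd b k)) := by
  have hcop : (Nat.gcd a k).Coprime (Nat.gcd b k) := by
    simpa only [Nat.gcd_comm _ k] using hab.gcd_both k k
  rw [Nat.gcd_comm, hab.gcd_mul k, Nat.gcd_comm k a, Nat.gcd_comm k b,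
    isMultiplicative_moebius.map_mul_of_coprime hcop, Nat.totient_mul hcop]
  push_cast
  ring

def tripleTerm (m n u α β γ : ℕ) : ℤ :=
  if α * β * γ ∣ u ∧ α * β ∣ m ∧ α * γ ∣ n then
    ((α * β * γ : ℕ) : ℤ) * μ (β * γ)
  else 0

def tripleSum (m n u : ℕ) : ℤ :=
  ∑ α ∈ u.divisors, ∑ β ∈ u.divisors, ∑ γ ∈ u.divisors, tripleTerm m n u α β γ

theorem tripleTerm_mul_of_coprime (m n : ℕ) {a b α₁ β₁ γ₁ α₂ β₂ γ₂ : ℕ} (hab : a.Coprime b)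
    (hα₁ : α₁ ∣ a) (hβ₁ : β₁ ∣ a) (hγ₁ : γ₁ ∣ a) (hα₂ : α₂ ∣ b) (hβ₂ : β₂ ∣ b) (hγ₂ : γ₂ ∣ b) :
    tripleTerm m n (a * b) (α₁ * α₂) (β₁ * β₂) (γ₁ * γ₂) =
      tripleTerm m n a α₁ β₁ γ₁ * tripleTerm m n b α₂ β₂ γ₂ := by
  have cop : ∀ {x y}, x ∣ a → y ∣ b → x.Coprime y := fun hx hy =>
    (hab.coprime_dvd_left hx).coprime_dvd_right hy
  have dvd_mul_iff : ∀ {x y k : ℕ}, x.Coprime y → (x * y ∣ k ↔ x ∣ k ∧ y ∣ k) := fun h =>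
    ⟨fun hk => ⟨(dvd_mul_right _ _).trans hk, (dvd_mul_left _ _).trans hk⟩,
      fun hk => h.mul_dvd_of_dvd_of_dvd hk.1 hk.2⟩
  have hprod : α₁ * α₂ * (β₁ * β₂) * (γ₁ * γ₂) ∣ a * b ↔
      α₁ * β₁ * γ₁ ∣ a ∧ α₂ * β₂ * γ₂ ∣ b := by
    have h₁ : (α₁ * β₁ * γ₁).Coprime b := .mul_left (.mul_left (hab.coprime_dvd_left hα₁)
      (hab.coprime_dvd_left hβ₁)) (hab.coprime_dvd_left hγ₁)
    have h₂ : (α₂ * β₂ * γ₂).Coprime a := .mul_left (.mul_left (hab.symm.coprime_dvd_left hα₂)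
      (hab.symm.coprime_dvd_left hβ₂)) (hab.symm.coprime_dvd_left hγ₂)
    rw [show α₁ * α₂ * (β₁ * β₂) * (γ₁ * γ₂) = α₁ * β₁ * γ₁ * (α₂ * β₂ * γ₂) by ring]
    exact ⟨fun h => ⟨h₁.dvd_of_dvd_mul_right ((dvd_mul_right _ _).trans h),
      h₂.dvd_of_dvd_mul_left ((dvd_mul_left _ _).trans h)⟩, fun h => mul_dvd_mul h.1 h.2⟩
  have hm : α₁ * α₂ * (β₁ * β₂) ∣ m ↔ α₁ * β₁ ∣ m ∧ α₂ * β₂ ∣ m := by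
    rw [mul_mul_mul_comm]
    exact dvd_mul_iff (Nat.Coprime.mul_left (.mul_right (cop hα₁ hα₂) (cop hα₁ hβ₂))
      (.mul_right (cop hβ₁ hα₂) (cop hβ₁ hβ₂)))
  have hn : α₁ * α₂ * (γ₁ * γ₂) ∣ n ↔ α₁ * γ₁ ∣ n ∧ α₂ * γ₂ ∣ n := by
    rw [mul_mul_mul_comm]
    exact dvd_mul_iff (Nat.Coprime.mul_left (.mul_right (cop hα₁ hα₂) (cop hα₁ hγ₂))
      (.mul_right (cop hγ₁ hα₂) (cop hγ₁ hγ₂)))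
  have hμ : μ (β₁ * β₂ * (γ₁ * γ₂)) = μ (β₁ * γ₁) * μ (β₂ * γ₂) := by
    rw [mul_mul_mul_comm]
    exact isMultiplicative_moebius.map_mul_of_coprime (Nat.Coprime.mul_left
      (.mul_right (cop hβ₁ hβ₂) (cop hβ₁ hγ₂)) (.mul_right (cop hγ₁ hβ₂) (cop hγ₁ hγ₂)))
  unfold tripleTerm
  simp only [ite_zero_mul_ite_zero, hprod, hm, hn, hμ]
  refine if_congr (by tauto) ?_ rfl
  push_cast
  ring

theorem tripleSum_mul_of_coprime (m n : ℕ) {a b : ℕ} (hab : a.Coprime b) :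
    tripleSum m n (a * b) = tripleSum m n a * tripleSum m n b := by
  simp only [tripleSum, hab.sum_divisors_mul_eq_sum_sum, sum_mul_sum]
  refine sum_congr rfl fun α₁ hα₁ => sum_congr rfl fun α₂ hα₂ => sum_congr rfl fun β₁ hβ₁ =>
    sum_congr rfl fun β₂ hβ₂ => sum_congr rfl fun γ₁ hγ₁ => sum_congr rfl fun γ₂ hγ₂ => ?_
  exact tripleTerm_mul_of_coprime m n hab (Nat.dvd_of_mem_divisors hα₁)
    (Nat.dvd_of_mem_divisors hβ₁) (Nat.dvd_of_mem_divisors hγ₁) (Nat.dvd_of_mem_divisors hα₂)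
    (Nat.dvd_of_mem_divisors hβ₂) (Nat.dvd_of_mem_divisors hγ₂)

theorem tripleSum_one (m n : ℕ) : tripleSum m n 1 = 1 := by
  simp [tripleSum, tripleTerm]

theorem tripleSum_prime (m n : ℕ) {p : ℕ} (hp : p.Prime) :
    tripleSum m n p = μ (Nat.gcd p (m * n)) * Nat.totient (Nat.gcd p (m * n)) := by
  have hpp : ¬ p * p ∣ p := fun h => by nlinarith [Nat.le_of_dvd hp.pos h, hp.two_le]
  have hppp : ¬ p * p * p ∣ p := fun h => hpp ((dvd_mul_right _ _).trans h)
  have hsum : tripleSum m n p = 1 + (if p ∣ n then -(p : ℤ) else 0) +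
      (if p ∣ m then -(p : ℤ) else 0) + (if p ∣ m ∧ p ∣ n then (p : ℤ) else 0) := by
    simp [tripleSum, tripleTerm, hp.divisors, sum_pair hp.one_lt.ne, hpp, hppp,
      moebius_apply_prime hp]
  rcases Nat.coprime_or_dvd_of_prime hp (m * n) with hcop | hdvd
  · have hmn : ¬ p ∣ m * n := (Nat.Prime.coprime_iff_not_dvd hp).1 hcop
    have hm : ¬ p ∣ m := fun h => hmn (h.mul_right n)
    have hn : ¬ p ∣ n := fun h => hmn (h.mul_left m)
    simp [hsum, Nat.Coprime.gcd_eq_one hcop, hm, hn]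
  · rw [hsum, Nat.gcd_eq_left hdvd, moebius_apply_prime hp, Nat.totient_prime hp,
      Nat.cast_sub hp.one_le]
    rcases hp.dvd_mul.1 hdvd with hm | hn
    · by_cases hn : p ∣ n <;> simp [hm, hn] <;> ring
    · by_cases hm : p ∣ m <;> simp [hm, hn] <;> ring

theorem moebius_totient_gcd_decomposition_general (m n u : ℕ) (hsq : Squarefree u) :
    (ArithmeticFunction.moebius (Nat.gcd u (m * n)) : ℤ) *
        (Nat.totient (Nat.gcd u (m * n)) : ℤ) =
      ∑ α ∈ u.divisors, ∑ β ∈ u.divisors, ∑ γ ∈ u.divisors,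
        if α * β * γ ∣ u ∧ α * β ∣ m ∧ α * γ ∣ n then
          ((α * β * γ : ℕ) : ℤ) * ArithmeticFunction.moebius (β * γ)
        else 0 := by
  exact Nat.eq_of_squarefree_of_multiplicative (g := tripleSum m n)
    (fun a b => moebius_mul_totient_gcd_mul_of_coprime (m * n)) (by simp)
    (fun a b => tripleSum_mul_of_coprime m n) (tripleSum_one m n)
    (fun p hp => (tripleSum_prime m n hp).symm) hsq

/-- Lemma 4.2: for positive integers `m, n` and squarefree positive `u`,
`μ(gcd(u, mn)) φ(gcd(u, mn)) = ∑∑∑_{αβγ ∣ u, αβ ∣ m, αγ ∣ n} αβγ · μ(βγ)`. -/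
theorem moebius_totient_gcd_decomposition (m n u : ℕ) (hm : 0 < m) (hn : 0 < n)
    (hu : 0 < u) (hsq : Squarefree u) :
    (ArithmeticFunction.moebius (Nat.gcd u (m * n)) : ℤ) *
        (Nat.totient (Nat.gcd u (m * n)) : ℤ) =
      ∑ α ∈ u.divisors, ∑ β ∈ u.divisors, ∑ γ ∈ u.divisors,
        if α * β * γ ∣ u ∧ α * β ∣ m ∧ α * γ ∣ n then
          ((α * β * γ : ℕ) : ℤ) * ArithmeticFunction.moebius (β * γ)
        else 0 :=
  moebius_totient_gcd_decomposition_general m n u hsq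
end
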